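/- Let a ∈ (1/2)·ℤ² with a ≠ 0, let b, c ∈ ℤ² be linearly independent, and let α ∈ ℝ² satisfy ⟨b, α⟩ ∈ ℤ and ⟨c, α⟩ ∈ ℤ. Then for every λ ∈ (1/2)·ℤ the Euclidean distance from α to the line {x ∈ ℝ² : ⟨a, x⟩ = λ} is an integer multiple of 1/(2·|a|·|det(b, c)|). -/

import Mathlib

/-- The integer vector `m ∈ ℤ²` viewed as a point of the Euclidean plane. -/
noncomputable def vec (m : Fin 2 → ℤ) : EuclideanSpace ℝ (Fin 2) :=
  (WithLp.equiv 2 (Fin 2 → ℝ)).symm (fun i => (m i : ℝ))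

/-- A real vector viewed as a point of the Euclidean plane. -/
noncomputable def vecR (a : Fin 2 → ℝ) : EuclideanSpace ℝ (Fin 2) :=
  (WithLp.equiv 2 (Fin 2 → ℝ)).symm a

/-- The determinant of the 2×2 matrix formed by `b, c ∈ ℤ²`. -/
def det2 (b c : Fin 2 → ℤ) : ℤ := b 0 * c 1 - b 1 * c 0

/-!
The distance from `α` to the line `⟨a, x⟩ = λ` is `|⟨a, α⟩ - λ| / ‖a‖`. By Cramer's rule the
coordinates of `α` lie in `(1 / det(b, c))·ℤ`, since `α` solves a linear system with matrix rows `b`, `c`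
and integer right-hand side; as `2a` is an integer vector and `2λ` an integer, the numerator
`⟨a, α⟩ - λ` lies in `(1 / (2 det(b, c)))·ℤ`.
-/

open Metric RealInnerProductSpace

/-- For `v = 0` both sides vanish: the set is empty or everything, and `‖v‖⁻¹ = 0`. -/
theorem infDist_setOf_inner_eq {E : Type*} [NormedAddCommGroup E] [InnerProductSpace ℝ E]
    (v p : E) (c : ℝ) :
    infDist p {x | ⟪v, x⟫ = c} = |⟪v, p⟫ - c| / ‖v‖ := by
  rcases eq_or_ne v 0 with rfl | hv
  · by_cases hc : c = 0
    · simpa [hc] using infDist_zero_of_mem (Set.mem_univ p)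
    · simp [Ne.symm hc]
  have hv' : 0 < ‖v‖ := norm_pos_iff.mpr hv
  set foot := p - ((⟪v, p⟫ - c) / ‖v‖ ^ 2) • v
  have hfoot : foot ∈ {x | ⟪v, x⟫ = c} := by
    simp only [foot, Set.mem_ofPred_eq, inner_sub_right, real_inner_smul_right,
      real_inner_self_eq_norm_sq]
    field_simp
    ring
  apply le_antisymm
  · calc infDist p {x | ⟪v, x⟫ = c} ≤ dist p foot := infDist_le_dist_of_mem hfoot
      _ = |⟪v, p⟫ - c| / ‖v‖ := by
        rw [dist_eq_norm, sub_sub_cancel, norm_smul, Real.norm_eq_abs, abs_div, abs_pow,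
          abs_norm]
        field_simp
  · refine (le_infDist ⟨foot, hfoot⟩).mpr fun y (hy : ⟪v, y⟫ = c) => ?_
    rw [div_le_iff₀ hv', dist_eq_norm, ← hy, ← inner_sub_right, mul_comm]
    exact abs_real_inner_le_norm v (p - y)

theorem inner_vec (m : Fin 2 → ℤ) (x : EuclideanSpace ℝ (Fin 2)) :
    ⟪vec m, x⟫ = m 0 * x 0 + m 1 * x 1 := by
  simp [vec, PiLp.inner_apply, Fin.sum_univ_two, mul_comm]

theorem inner_vecR (a : Fin 2 → ℝ) (x : EuclideanSpace ℝ (Fin 2)) :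
    ⟪vecR a, x⟫ = a 0 * x 0 + a 1 * x 1 := by
  simp [vecR, PiLp.inner_apply, Fin.sum_univ_two, mul_comm]

/-- Cramer's rule for a `2 × 2` integer system with integer right-hand side. -/
theorem det2_mul_eq_int_of_dot_eq_int {b c : Fin 2 → ℤ} {x₀ x₁ : ℝ} {p q : ℤ}
    (hb : b 0 * x₀ + b 1 * x₁ = p) (hc : c 0 * x₀ + c 1 * x₁ = q) :
    det2 b c * x₀ = ((p * c 1 - q * b 1 : ℤ) : ℝ) ∧
      det2 b c * x₁ = ((q * b 0 - p * c 0 : ℤ) : ℝ) := by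
  push_cast [det2]
  constructor
  · linear_combination (c 1 : ℝ) * hb - (b 1 : ℝ) * hc
  · linear_combination (b 0 : ℝ) * hc - (c 0 : ℝ) * hb

theorem exists_int_two_det2_mul_dot_sub {a : Fin 2 → ℝ} (ha : ∀ i, ∃ n : ℤ, a i = n / 2)
    {b c : Fin 2 → ℤ} {x₀ x₁ : ℝ} (hb : ∃ n : ℤ, b 0 * x₀ + b 1 * x₁ = n)
    (hc : ∃ n : ℤ, c 0 * x₀ + c 1 * x₁ = n) {lam : ℝ} (hlam : ∃ n : ℤ, lam = n / 2) :
    ∃ k : ℤ, 2 * det2 b c * (a 0 * x₀ + a 1 * x₁ - lam) = k := by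
  obtain ⟨n₀, hn₀⟩ := ha 0
  obtain ⟨n₁, hn₁⟩ := ha 1
  obtain ⟨p, hp⟩ := hb
  obtain ⟨q, hq⟩ := hc
  obtain ⟨m, rfl⟩ := hlam
  obtain ⟨hx₀, hx₁⟩ := det2_mul_eq_int_of_dot_eq_int hp hq
  refine ⟨n₀ * (p * c 1 - q * b 1) + n₁ * (q * b 0 - p * c 0) - m * det2 b c, ?_⟩
  rw [hn₀, hn₁]
  push_cast at hx₀ hx₁ ⊢
  linear_combination (n₀ : ℝ) * hx₀ + (n₁ : ℝ) * hx₁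

theorem distance_divisibility_half_integer_general
    (a : Fin 2 → ℝ) (ha_half : ∀ i, ∃ n : ℤ, a i = n / 2)
    (b c : Fin 2 → ℤ) (hbc : det2 b c ≠ 0)
    (α : EuclideanSpace ℝ (Fin 2))
    (hb : ∃ n : ℤ, (inner ℝ (vec b) α : ℝ) = n)
    (hc : ∃ n : ℤ, (inner ℝ (vec c) α : ℝ) = n) :
    ∀ lam : ℝ, (∃ n : ℤ, lam = n / 2) → ∃ k : ℤ,
      Metric.infDist α {x : EuclideanSpace ℝ (Fin 2) | (inner ℝ (vecR a) x : ℝ) = lam} =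
        k * (2 * ‖vecR a‖ * |(det2 b c : ℝ)|)⁻¹ := by
  intro lam hlam
  rw [inner_vec] at hb hc
  obtain ⟨k, hk⟩ := exists_int_two_det2_mul_dot_sub ha_half hb hc hlam
  have hdist : |⟪vecR a, α⟫ - lam| = |(k : ℝ)| / (2 * |(det2 b c : ℝ)|) := by
    rw [← hk, inner_vecR, abs_mul, abs_mul, abs_two]
    field_simp [Int.cast_ne_zero.mpr hbc]
  refine ⟨|k|, ?_⟩
  rw [infDist_setOf_inner_eq, hdist, Int.cast_abs]
  field_simp

/-- Let `a ∈ (1/2)·ℤ²` with `a ≠ 0`, let `b, c ∈ ℤ²` be linearly independent, and let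
`α ∈ ℝ²` satisfy `⟨b, α⟩ ∈ ℤ` and `⟨c, α⟩ ∈ ℤ`. Then for every `λ ∈ (1/2)·ℤ` the Euclidean
distance from `α` to the line `{x : ⟨a, x⟩ = λ}` is an integer multiple of
`1/(2·|a|·|det(b, c)|)`. -/
theorem distance_divisibility_half_integer
    (a : Fin 2 → ℝ) (ha_half : ∀ i, ∃ n : ℤ, a i = n / 2) (ha : a ≠ 0)
    (b c : Fin 2 → ℤ) (hbc : det2 b c ≠ 0)
    (α : EuclideanSpace ℝ (Fin 2))
    (hb : ∃ n : ℤ, (inner ℝ (vec b) α : ℝ) = n)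
    (hc : ∃ n : ℤ, (inner ℝ (vec c) α : ℝ) = n) :
    ∀ lam : ℝ, (∃ n : ℤ, lam = n / 2) → ∃ k : ℤ,
      Metric.infDist α {x : EuclideanSpace ℝ (Fin 2) | (inner ℝ (vecR a) x : ℝ) = lam} =
        k * (2 * ‖vecR a‖ * |(det2 b c : ℝ)|)⁻¹ :=
  distance_divisibility_half_integer_general a ha_half b c hbc α hb hc
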